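/- arXiv:1911.07497 — 4 statements merged into one kernel-verified Lean document; each statement's English description precedes it below -/
import Mathlib

section
/- (Pólya–Vinogradov type estimate) Let p be an odd prime and χ a nontrivial multiplicative character mod p. Then for any integers M and N with 0 ≤ N, the incomplete sum |Σ_{x=M}^{M+N} χ(x)| ≤ √p · log p. -/
/-!
Multiplying the incomplete sum by the Gauss sum `τ(χ⁻¹)`, of absolute value `√p`, and expanding
`χ(b) τ(χ⁻¹) = ∑ₜ χ⁻¹(t) e(bt/p)` turns it into `∑ₜ χ⁻¹(t) e(Mt/p) ∑ₓ e(t/p)ˣ`. Each geometric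
sum is at most `2 / |e(t/p) - 1| ≤ p / (2|t|)` by Jordan's inequality, where `|t| ≤ p/2` is the
least absolute residue of `t`. Summing over `t ≠ 0` gives `p · H_{(p-1)/2}`, and
`H_m ≤ log (2m+1)` because `1/k ≤ log (2k+1) - log (2k-1)`.
-/

open Finset Real

lemma Real.two_mul_le_log_one_add_sub_log_one_sub {x : ℝ} (hx₀ : 0 ≤ x) (hx₁ : x < 1) :
    2 * x ≤ log (1 + x) - log (1 - x) := by
  have h := hasSum_log_sub_log_of_abs_lt_one (abs_lt.2 ⟨by linarith, hx₁⟩)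
  simpa using le_hasSum h 0 fun k _ ↦ by positivity

lemma Real.inv_le_log_two_mul_add_one_sub_log_two_mul_sub_one {a : ℝ} (ha : 1 / 2 < a) :
    a⁻¹ ≤ log (2 * a + 1) - log (2 * a - 1) := by
  have h2a : 0 < 2 * a := by linarith
  have h := two_mul_le_log_one_add_sub_log_one_sub (x := (2 * a)⁻¹) (by positivity)
    (inv_lt_one_of_one_lt₀ (by linarith))
  rw [show 1 + (2 * a)⁻¹ = (2 * a + 1) / (2 * a) by field_simp,
    show 1 - (2 * a)⁻¹ = (2 * a - 1) / (2 * a) by field_simp,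
    log_div (by linarith) h2a.ne', log_div (by linarith) h2a.ne'] at h
  linarith [show 2 * (2 * a)⁻¹ = a⁻¹ by field_simp]

lemma harmonic_le_log_two_mul_add_one (n : ℕ) : (harmonic n : ℝ) ≤ log (2 * n + 1) := by
  induction n with
  | zero => simp
  | succ n ih =>
    have step := inv_le_log_two_mul_add_one_sub_log_two_mul_sub_one (a := (n : ℝ) + 1)
      (by linarith [(n.cast_nonneg : (0 : ℝ) ≤ n)])
    rw [show 2 * ((n : ℝ) + 1) - 1 = 2 * n + 1 by ring] at step
    rw [harmonic_succ]
    push_cast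
    linarith

lemma sum_Icc_neg_inv_natAbs_eq_two_mul_harmonic (m : ℕ) :
    ∑ j ∈ Icc (-(m : ℤ)) m, ((j.natAbs : ℝ))⁻¹ = 2 * harmonic m := by
  induction m with
  | zero => simp
  | succ m ih =>
    have hIcc : Icc (-((m + 1 : ℕ) : ℤ)) (m + 1 : ℕ) =
        insert (-((m + 1 : ℕ) : ℤ)) (insert ((m + 1 : ℕ) : ℤ) (Icc (-(m : ℤ)) m)) := by
      ext j; simp only [mem_Icc, mem_insert]; omega
    rw [hIcc, sum_insert (by simp; omega), sum_insert (by simp), ih, harmonic_succ]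
    simp only [Int.natAbs_neg, Int.natAbs_natCast]
    push_cast
    ring

/-- The term `t = 0` contributes `0⁻¹ = 0`. -/
lemma ZMod.sum_inv_natAbs_valMinAbs (m : ℕ) :
    ∑ t : ZMod (2 * m + 1), ((t.valMinAbs.natAbs : ℝ))⁻¹ = 2 * harmonic m := by
  rw [← sum_Icc_neg_inv_natAbs_eq_two_mul_harmonic]
  refine sum_nbij valMinAbs (fun t _ ↦ ?_) (fun a _ b _ h ↦ injective_valMinAbs h)
    (fun j hj ↦ ⟨j, mem_coe.2 (mem_univ _), ?_⟩) (fun _ _ ↦ rfl)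
  · obtain ⟨h₁, h₂⟩ := t.valMinAbs_mem_Ioc
    simp only [mem_Icc]
    push_cast at h₁ h₂
    omega
  · rw [valMinAbs_spec]
    simp only [coe_Icc, Set.mem_Icc] at hj
    refine ⟨rfl, ?_, ?_⟩ <;> push_cast <;> omega

lemma ZMod.norm_stdAddChar {N : ℕ} [NeZero N] (t : ZMod N) : ‖stdAddChar t‖ = 1 :=
  Circle.norm_coe _

lemma ZMod.four_mul_natAbs_valMinAbs_div_le_norm_stdAddChar_sub_one {N : ℕ} [NeZero N]
    (t : ZMod N) : 4 * (t.valMinAbs.natAbs : ℝ) / N ≤ ‖stdAddChar t - 1‖ := by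
  have hN : (0 : ℝ) < N := by exact_mod_cast Nat.pos_of_neZero N
  set v : ℝ := (t.valMinAbs : ℝ) with hv_def
  have hv : 2 * |v| ≤ N := by
    obtain ⟨h₁, h₂⟩ := t.valMinAbs_mem_Ioc
    have h₁' : -(N : ℝ) < v * 2 := by rw [hv_def]; exact_mod_cast h₁
    have h₂' : v * 2 ≤ N := by rw [hv_def]; exact_mod_cast h₂
    cases abs_cases v <;> linarith
  have jordan := mul_abs_le_abs_sin (x := π * v / N) (by
    rw [abs_div, abs_mul, abs_of_pos pi_pos, abs_of_pos hN, div_le_div_iff₀ hN two_pos]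
    nlinarith [pi_pos])
  rw [abs_div, abs_mul, abs_of_pos pi_pos, abs_of_pos hN] at jordan
  conv_rhs => rw [← t.coe_valMinAbs, stdAddChar_coe,
    show 2 * π * Complex.I * t.valMinAbs / N = Complex.I * ((2 * π * v / N : ℝ) : ℂ) by
      push_cast [hv_def]; ring,
    Complex.norm_exp_I_mul_ofReal_sub_one, norm_mul, Real.norm_eq_abs, Real.norm_eq_abs,
    show 2 * π * v / N / 2 = π * v / N by ring]
  calc 4 * (t.valMinAbs.natAbs : ℝ) / N = 2 * (2 / π * (π * |v| / N)) := by
        rw [Nat.cast_natAbs, Int.cast_abs]; field_simp; ring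
    _ ≤ |2| * |sin (π * v / N)| := by rw [abs_two]; gcongr

lemma norm_sub_one_mul_norm_geom_sum_le {𝕜 : Type*} [NormedDivisionRing 𝕜] {z : 𝕜}
    (hz : ‖z‖ ≤ 1) (n : ℕ) : ‖z - 1‖ * ‖∑ i ∈ range n, z ^ i‖ ≤ 2 := by
  rw [← norm_mul, mul_geom_sum]
  calc ‖z ^ n - 1‖ ≤ ‖z ^ n‖ + ‖(1 : 𝕜)‖ := norm_sub_le _ _
    _ ≤ 1 + 1 := by rw [norm_pow, norm_one]; gcongr; exact pow_le_one₀ (norm_nonneg z) hz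
    _ = 2 := one_add_one_eq_two

lemma ZMod.norm_geom_sum_stdAddChar_le {N : ℕ} [NeZero N] {t : ZMod N} (ht : t ≠ 0) (n : ℕ) :
    ‖∑ x ∈ range n, stdAddChar t ^ x‖ ≤ N / 2 * (t.valMinAbs.natAbs : ℝ)⁻¹ := by
  have hv : (0 : ℝ) < t.valMinAbs.natAbs := by simpa using ht
  have hN : (0 : ℝ) < N := by exact_mod_cast Nat.pos_of_neZero N
  have hlow := four_mul_natAbs_valMinAbs_div_le_norm_stdAddChar_sub_one t
  have hpos : 0 < ‖stdAddChar t - 1‖ := lt_of_lt_of_le (by positivity) hlow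
  calc ‖∑ x ∈ range n, stdAddChar t ^ x‖ ≤ 2 / ‖stdAddChar t - 1‖ := by
        rw [le_div_iff₀' hpos]
        exact norm_sub_one_mul_norm_geom_sum_le (norm_stdAddChar t).le n
    _ ≤ 2 / (4 * t.valMinAbs.natAbs / N) := by gcongr
    _ = N / 2 * (t.valMinAbs.natAbs : ℝ)⁻¹ := by field_simp; ring

lemma norm_gaussSum_eq_sqrt_card {F : Type*} [Field F] [Fintype F] {χ : MulChar F ℂ}
    (hχ : χ ≠ 1) {ψ : AddChar F ℂ} (hψ : ψ.IsPrimitive) :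
    ‖gaussSum χ ψ‖ = √(Fintype.card F) := by
  have h := gaussSum_mul_gaussSum_eq_card hχ hψ
  rw [← star_gaussSum_eq, ← starRingEnd_apply, Complex.mul_conj] at h
  rw [Complex.norm_def, Complex.ofReal_inj.1 (h.trans (Complex.ofReal_natCast _).symm)]

namespace DirichletCharacter

lemma isPrimitive_of_ne_one {R : Type*} [CommMonoidWithZero R] {p : ℕ} [Fact p.Prime]
    {χ : DirichletCharacter R p} (hχ : χ ≠ 1) : χ.IsPrimitive :=
  ((Fact.out : p.Prime).eq_one_or_self_of_dvd _ χ.conductor_dvd_level).resolve_left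
    fun h ↦ hχ (χ.eq_one_iff_conductor_eq_one.2 h)

lemma gaussSum_inv_mul_sum_range {R : Type*} [CommRing R] [IsDomain R] {N : ℕ} [NeZero N]
    {χ : DirichletCharacter R N} (hχ : χ.IsPrimitive) (e : AddChar (ZMod N) R)
    (a : ZMod N) (n : ℕ) :
    gaussSum χ⁻¹ e * ∑ x ∈ range n, χ (a + x) =
      ∑ t, χ⁻¹ t * e (a * t) * ∑ x ∈ range n, e t ^ x := by
  have hχ' : (χ⁻¹).IsPrimitive := by rwa [isPrimitive_def, conductor_inv]
  have expand (b : ZMod N) : χ b * gaussSum χ⁻¹ e = ∑ t, χ⁻¹ t * e (b * t) := by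
    have h := gaussSum_mulShift_of_isPrimitive e hχ' b
    rw [inv_inv] at h
    rw [← h, gaussSum]
    simp only [AddChar.mulShift_apply]
  simp_rw [mul_sum, mul_comm (gaussSum _ _), expand, add_mul, AddChar.map_add_eq_mul]
  rw [sum_comm]
  refine sum_congr rfl fun t _ ↦ sum_congr rfl fun x _ ↦ ?_
  rw [← nsmul_eq_mul, AddChar.map_nsmul_eq_pow, mul_assoc]

lemma norm_sum_range_mul_norm_gaussSum_le {N : ℕ} [Fact (1 < N)]
    {χ : DirichletCharacter ℂ N} (hχ : χ.IsPrimitive) (a : ZMod N) (n : ℕ) :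
    ‖∑ x ∈ range n, χ (a + x)‖ * ‖gaussSum χ⁻¹ ZMod.stdAddChar‖ ≤
      N / 2 * ∑ t : ZMod N, ((t.valMinAbs.natAbs : ℝ))⁻¹ := by
  rw [mul_comm, ← norm_mul, gaussSum_inv_mul_sum_range hχ, mul_sum]
  refine (norm_sum_le _ _).trans (sum_le_sum fun t _ ↦ ?_)
  rcases eq_or_ne t 0 with rfl | ht
  · simp [MulChar.map_zero]
  rw [norm_mul, norm_mul, ZMod.norm_stdAddChar, mul_one]
  exact (mul_le_of_le_one_left (norm_nonneg _) (norm_le_one _ _)).trans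
    (ZMod.norm_geom_sum_stdAddChar_le ht n)

end DirichletCharacter

/-- Pólya–Vinogradov type estimate: for a nontrivial multiplicative character χ mod an
odd prime p, any incomplete sum of χ over consecutive integers is at most √p · log p. -/
theorem polya_vinogradov (p : ℕ) [Fact p.Prime] (hp : p ≠ 2)
    (χ : DirichletCharacter ℂ p) (hχ : χ ≠ 1) (M : ℤ) (N : ℕ) :
    ‖∑ x ∈ Finset.range (N + 1), χ ((M + x : ℤ) : ZMod p)‖ ≤
      Real.sqrt p * Real.log p := by
  have : Fact (1 < p) := ⟨(Fact.out : p.Prime).one_lt⟩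
  have hgauss : ‖gaussSum χ⁻¹ ZMod.stdAddChar‖ = √p := by
    rw [norm_gaussSum_eq_sqrt_card (inv_ne_one.2 hχ) (ZMod.isPrimitive_stdAddChar p), ZMod.card]
  have hbound := χ.norm_sum_range_mul_norm_gaussSum_le (χ.isPrimitive_of_ne_one hχ) M (N + 1)
  obtain ⟨m, rfl⟩ := (Fact.out : p.Prime).odd_of_ne_two hp
  rw [ZMod.sum_inv_natAbs_valMinAbs, hgauss] at hbound
  refine le_of_mul_le_mul_right ?_ (by positivity : 0 < √((2 * m + 1 : ℕ) : ℝ))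
  calc _ ≤ ((2 * m + 1 : ℕ) : ℝ) / 2 * (2 * harmonic m) := by push_cast at hbound ⊢; exact hbound
    _ = ((2 * m + 1 : ℕ) : ℝ) * harmonic m := by ring
    _ ≤ ((2 * m + 1 : ℕ) : ℝ) * log (2 * m + 1 : ℕ) := by
        gcongr
        exact_mod_cast harmonic_le_log_two_mul_add_one m
    _ = _ := by rw [mul_right_comm, Real.mul_self_sqrt (by positivity)]
end

section
/- Let Φ be an m × n matrix with unit-norm columns and coherence μ = max_{a≠b} |⟨Φ_a, Φ_b⟩|. Then the restricted isometry constant of order k satisfies δ_k ≤ (k-1)·μ. In particular δ_k ≤ k·μ. -/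
/-- x is k-sparse: at most k nonzero entries. -/
def IsSparse {n : ℕ} (k : ℕ) (x : Fin n → ℝ) : Prop :=
  ∃ s : Finset (Fin n), s.card ≤ k ∧ ∀ j ∉ s, x j = 0

/-- The restricted isometry constant of order k: the infimum of all δ ≥ 0 such that
(1-δ)‖x‖² ≤ ‖Φx‖² ≤ (1+δ)‖x‖² for all k-sparse x. -/
noncomputable def ric {m n : ℕ} (Φ : Matrix (Fin m) (Fin n) ℝ) (k : ℕ) : ℝ :=
  sInf {δ : ℝ | 0 ≤ δ ∧ ∀ x : Fin n → ℝ, IsSparse k x →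
    (1 - δ) * (∑ j, x j ^ 2) ≤ (∑ i, (∑ j, Φ i j * x j) ^ 2) ∧
    (∑ i, (∑ j, Φ i j * x j) ^ 2) ≤ (1 + δ) * (∑ j, x j ^ 2)}

lemma key_bound {m n : ℕ} (Φ : Matrix (Fin m) (Fin n) ℝ) (μ : ℝ)
    (hcols : ∀ j, ∑ i, Φ i j ^ 2 = 1)
    (hμ0 : 0 ≤ μ)
    (hμ : ∀ a b : Fin n, a ≠ b → |∑ i, Φ i a * Φ i b| ≤ μ)
    (k : ℕ) (x : Fin n → ℝ) (hx : IsSparse k x) :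
    |(∑ i, (∑ j, Φ i j * x j) ^ 2) - ∑ j, x j ^ 2| ≤ ((k : ℝ) - 1) * μ * ∑ j, x j ^ 2 := by
  obtain ⟨s, hcard, hzero⟩ := hx
  have hN : (∑ j, x j ^ 2) = ∑ j ∈ s, x j ^ 2 :=
    (Finset.sum_subset s.subset_univ (fun j _ hj => by rw [hzero j hj]; ring)).symm
  have hrow : ∀ i, (∑ j, Φ i j * x j) = ∑ j ∈ s, Φ i j * x j := fun i =>
    (Finset.sum_subset s.subset_univ (fun j _ hj => by rw [hzero j hj]; ring)).symm
  have hQ : (∑ i, (∑ j, Φ i j * x j) ^ 2)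
      = ∑ a ∈ s, ∑ b ∈ s, x a * x b * (∑ i, Φ i a * Φ i b) := by
    simp_rw [hrow, sq, Finset.sum_mul_sum]
    rw [Finset.sum_comm]
    refine Finset.sum_congr rfl fun a _ => ?_
    rw [Finset.sum_comm]
    refine Finset.sum_congr rfl fun b _ => ?_
    rw [Finset.mul_sum]
    exact Finset.sum_congr rfl fun i _ => by ring
  have hdiag : ∀ a ∈ s, x a * x a * (∑ i, Φ i a * Φ i a) = x a ^ 2 := by
    intro a _
    have : (∑ i, Φ i a * Φ i a) = 1 := by simpa [sq] using hcols a
    rw [this]; ring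
  have hsplit : (∑ i, (∑ j, Φ i j * x j) ^ 2)
      = (∑ a ∈ s, x a ^ 2) + ∑ a ∈ s, ∑ b ∈ s.erase a, x a * x b * (∑ i, Φ i a * Φ i b) := by
    rw [hQ, ← Finset.sum_add_distrib]
    refine Finset.sum_congr rfl fun a ha => ?_
    rw [← Finset.add_sum_erase _ _ ha, hdiag a ha]
  set E := ∑ a ∈ s, ∑ b ∈ s.erase a, x a * x b * (∑ i, Φ i a * Φ i b) with hE
  have habs : |E| ≤ μ * ∑ a ∈ s, ∑ b ∈ s.erase a, |x a| * |x b| := by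
    calc |E| ≤ ∑ a ∈ s, |∑ b ∈ s.erase a, x a * x b * (∑ i, Φ i a * Φ i b)| :=
          Finset.abs_sum_le_sum_abs _ _
      _ ≤ ∑ a ∈ s, ∑ b ∈ s.erase a, |x a * x b * (∑ i, Φ i a * Φ i b)| :=
          Finset.sum_le_sum fun a _ => Finset.abs_sum_le_sum_abs _ _
      _ ≤ ∑ a ∈ s, ∑ b ∈ s.erase a, |x a| * |x b| * μ := by
          refine Finset.sum_le_sum fun a _ => Finset.sum_le_sum fun b hb => ?_
          rw [abs_mul, abs_mul]
          exact mul_le_mul_of_nonneg_left (hμ a b (Finset.ne_of_mem_erase hb).symm)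
            (mul_nonneg (abs_nonneg _) (abs_nonneg _))
      _ = μ * ∑ a ∈ s, ∑ b ∈ s.erase a, |x a| * |x b| := by
          simp_rw [Finset.mul_sum]
          exact Finset.sum_congr rfl fun a _ => Finset.sum_congr rfl fun b _ => by ring
  have hsum_erase : (∑ a ∈ s, ∑ b ∈ s.erase a, |x a| * |x b|)
      = (∑ a ∈ s, |x a|) ^ 2 - ∑ a ∈ s, x a ^ 2 := by
    have : ∀ a ∈ s, (∑ b ∈ s.erase a, |x a| * |x b|)
        = |x a| * (∑ b ∈ s, |x b|) - x a ^ 2 := by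
      intro a ha
      rw [← Finset.mul_sum, Finset.sum_erase_eq_sub ha, mul_sub, ← sq_abs (x a), sq]
    rw [Finset.sum_congr rfl this, Finset.sum_sub_distrib, ← Finset.sum_mul, sq]
  have hCS : (∑ a ∈ s, |x a|) ^ 2 ≤ (s.card : ℝ) * ∑ a ∈ s, x a ^ 2 := by
    have := sq_sum_le_card_mul_sum_sq (s := s) (f := fun a => |x a|)
    simpa [sq_abs] using this
  have hNnonneg : (0:ℝ) ≤ ∑ a ∈ s, x a ^ 2 := Finset.sum_nonneg fun a _ => sq_nonneg _
  have hck : (s.card : ℝ) ≤ k := by exact_mod_cast hcard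
  have hfinal : |E| ≤ ((k : ℝ) - 1) * μ * ∑ a ∈ s, x a ^ 2 := by
    calc |E| ≤ μ * ((∑ a ∈ s, |x a|) ^ 2 - ∑ a ∈ s, x a ^ 2) := by rw [← hsum_erase]; exact habs
      _ ≤ ((k : ℝ) - 1) * μ * ∑ a ∈ s, x a ^ 2 := by
        nlinarith [mul_le_mul_of_nonneg_left hCS hμ0, mul_le_mul_of_nonneg_left hck (mul_nonneg hμ0 hNnonneg)]
  have : (∑ i, (∑ j, Φ i j * x j) ^ 2) - ∑ j, x j ^ 2 = E := by
    rw [hsplit, hN]; ring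
  rw [this, hN]
  exact hfinal

/-- If Φ has unit-norm columns and coherence μ, then δ_k ≤ (k-1)·μ, and in
particular δ_k ≤ k·μ. -/
theorem ric_le_coherence {m n : ℕ} (Φ : Matrix (Fin m) (Fin n) ℝ) (μ : ℝ)
    (hcols : ∀ j, ∑ i, Φ i j ^ 2 = 1)
    (hμ0 : 0 ≤ μ)
    (hμ : ∀ a b : Fin n, a ≠ b → |∑ i, Φ i a * Φ i b| ≤ μ)
    (k : ℕ) (hk : 1 ≤ k) :
    ric Φ k ≤ ((k : ℝ) - 1) * μ ∧ ric Φ k ≤ (k : ℝ) * μ := by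
  have hk1 : (1:ℝ) ≤ k := by exact_mod_cast hk
  have hδ0 : 0 ≤ ((k:ℝ) - 1) * μ := mul_nonneg (by linarith) hμ0
  have h1 : ric Φ k ≤ ((k:ℝ) - 1) * μ := by
    apply csInf_le ⟨0, fun δ hδ => hδ.1⟩
    refine ⟨hδ0, fun x hx => ?_⟩
    have := key_bound Φ μ hcols hμ0 hμ k x hx
    rw [abs_le] at this
    constructor <;> nlinarith [this.1, this.2]
  exact ⟨h1, h1.trans (by nlinarith)⟩
end

section
/- Let Φ be an m × n matrix with unit ℓ2-norm columns whose restricted isometry constant satisfies δ_{2k} < 1/√2. Then every k-sparse vector x ∈ ℝⁿ is the unique minimizer of ‖z‖_1 subject to Φz = Φx. -/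
/-!
Let `h = z - x ∈ ker Φ`. It suffices that `‖h_S‖₁ < ‖h_Sᶜ‖₁` whenever `#S ≤ k` (the null
space property). If this fails, let `g` be `h` restricted to its `k` largest entries and
`α = ‖g‖₁ / k`. The tail `h - g` satisfies `‖h - g‖_∞ ≤ α` and `‖h - g‖₁ ≤ k α`, so by Cai and
Zhang's sparse representation of this polytope it is a convex combination of `k`-sparse
vectors `u` supported off `g` with `‖u‖₂ ≤ ‖g‖₂`. For each `u`, the lower RIP bound at
`g + μ u` minus `μ²` times the upper bound at `μ g - u` eliminates `‖Φ u‖²`; averaging over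
the combination turns `⟪Φ g, Φ u⟫` into `-‖Φ g‖²` because `Φ g = -Φ (h - g)`, and the choice
`μ = √2 - 1` then leaves `(1 - √2 δ) ‖g‖² ≤ 0`, that is, `δ ≥ 1 / √2`.
-/

open Finset Function RealInnerProductSpace WithLp

section Sparse

variable {n k l : ℕ} {x y : Fin n → ℝ}

theorem isSparse_iff_card_support : IsSparse k x ↔ #{j | x j ≠ 0} ≤ k := by
  refine ⟨fun ⟨s, hs, hx⟩ => le_trans (card_le_card fun j hj => ?_) hs, fun h => ⟨_, h, ?_⟩⟩
  · by_contra hjs; exact (mem_filter.1 hj).2 (hx j hjs)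
  · intro j hj; by_contra hxj; exact hj (mem_filter.2 ⟨mem_univ j, hxj⟩)

theorem IsSparse.of_support_subset (hx : IsSparse k x) (h : support y ⊆ support x) :
    IsSparse k y := by
  obtain ⟨s, hs, hx⟩ := hx
  exact ⟨s, hs, fun j hj => notMem_support.1 fun hy => h hy (hx j hj)⟩

theorem IsSparse.add (hx : IsSparse k x) (hy : IsSparse l y) : IsSparse (k + l) (x + y) := by
  obtain ⟨s, hs, hx⟩ := hx
  obtain ⟨t, ht, hy⟩ := hy
  refine ⟨s ∪ t, (card_union_le s t).trans (add_le_add hs ht), fun j hj => ?_⟩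
  rw [mem_union, not_or] at hj
  simp [hx j hj.1, hy j hj.2]

theorem IsSparse.smul (hx : IsSparse k x) (c : ℝ) : IsSparse k (c • x) :=
  hx.of_support_subset (support_const_smul_subset c x)

theorem IsSparse.sum_sq_le (hx : IsSparse k x) {α : ℝ} (hα : ∀ j, |x j| ≤ α) :
    ∑ j, x j ^ 2 ≤ k * α ^ 2 := by
  obtain ⟨s, hs, hx⟩ := hx
  calc ∑ j, x j ^ 2 = ∑ j ∈ s, x j ^ 2 :=
        (sum_subset (subset_univ s) fun j _ hj => by simp [hx j hj]).symm
    _ ≤ ∑ _j ∈ s, α ^ 2 := sum_le_sum fun j _ => by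
        rw [← sq_abs]; exact pow_le_pow_left₀ (abs_nonneg _) (hα j) 2
    _ = #s * α ^ 2 := by rw [sum_const, nsmul_eq_mul]
    _ ≤ k * α ^ 2 := by gcongr

end Sparse

section CappedSimplex

variable {n k : ℕ} {α : ℝ} {p : Fin n → ℝ}

noncomputable def fractionalCoords (α : ℝ) (p : Fin n → ℝ) : Finset (Fin n) :=
  {j | 0 < p j ∧ p j < α}

theorem isSparse_of_card_fractionalCoords_le_one (h0 : ∀ j, 0 ≤ p j) (hα : ∀ j, p j ≤ α)
    (h1 : ∑ j, p j ≤ k * α) (hfrac : #(fractionalCoords α p) ≤ 1) : IsSparse k p := by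
  rw [isSparse_iff_card_support]
  set S : Finset (Fin n) := {j | p j ≠ 0}
  obtain hS | ⟨j₁, hj₁⟩ := S.eq_empty_or_nonempty
  · simp [hS]
  have hpos : ∀ j ∈ S, 0 < p j := fun j hj => (h0 j).lt_of_ne' (mem_filter.1 hj).2
  have hα0 : 0 < α := (hpos j₁ hj₁).trans_le (hα j₁)
  have hslack : ∑ j ∈ S, (α - p j) < α := by
    have hsub : fractionalCoords α p ⊆ S := fun j hj =>
      mem_filter.2 ⟨mem_univ j, (mem_filter.1 hj).2.1.ne'⟩
    rw [← sum_subset hsub fun j hjS hj => ?_]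
    · obtain hF | ⟨j₀, hj₀⟩ := (fractionalCoords α p).eq_empty_or_nonempty
      · simpa [hF] using hα0
      · rw [eq_singleton_iff_unique_mem.2 ⟨hj₀, fun j hj => card_le_one.1 hfrac j hj j₀ hj₀⟩,
          sum_singleton]
        linarith [(mem_filter.1 hj₀).2.1]
    · have : ¬ p j < α := fun h => hj (mem_filter.2 ⟨mem_univ j, hpos j hjS, h⟩)
      linarith [hα j]
  have hsum : ∑ j ∈ S, p j = ∑ j, p j :=
    sum_subset (subset_univ S) fun j _ hj => by simpa [S] using hj
  have : (#S : ℝ) * α < (k + 1) * α := by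
    calc (#S : ℝ) * α = ∑ j ∈ S, p j + ∑ j ∈ S, (α - p j) := by
          rw [← sum_add_distrib]; simp
      _ < (k + 1) * α := by linarith
  exact Nat.lt_succ_iff.1 (by exact_mod_cast lt_of_mul_lt_mul_right this hα0.le)

theorem add_smul_single_sub_single_apply (p : Fin n → ℝ) {i j : Fin n} (hij : i ≠ j) (t : ℝ)
    (l : Fin n) : (p + t • (Pi.single i 1 - Pi.single j 1) : Fin n → ℝ) l =
      if l = i then p i + t else if l = j then p j - t else p l := by
  by_cases hli : l = i
  · subst hli; simp [hij]
  · by_cases hlj : l = j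
    · subst hlj; simp [hli, sub_eq_add_neg]
    · simp [hli, hlj]

theorem fractionalCoords_add_smul_single_sub_single_ssubset (h0 : ∀ j, 0 ≤ p j)
    (hα : ∀ j, p j ≤ α) {i j : Fin n} (hij : i ≠ j) (hi : i ∈ fractionalCoords α p)
    (hj : j ∈ fractionalCoords α p) {t : ℝ} (h₁ : -p i ≤ t) (h₂ : t ≤ α - p i)
    (h₃ : p j - α ≤ t) (h₄ : t ≤ p j)
    (hend : (p i + t = 0 ∨ p i + t = α) ∨ (p j - t = 0 ∨ p j - t = α)) {q : Fin n → ℝ}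
    (hq : q = p + t • (Pi.single i 1 - Pi.single j 1)) :
    (∀ l, 0 ≤ q l) ∧ (∀ l, q l ≤ α) ∧ ∑ l, q l = ∑ l, p l ∧ support q ⊆ support p ∧
      fractionalCoords α q ⊂ fractionalCoords α p := by
  have hpi := hi
  have hpj := hj
  simp only [fractionalCoords, mem_filter, mem_univ, true_and] at hpi hpj
  have hsum : ∑ l, q l = ∑ l, p l := by simp [hq, sum_add_distrib, ← mul_sum]
  replace hq l : q l = if l = i then p i + t else if l = j then p j - t else p l := by
    rw [hq, add_smul_single_sub_single_apply p hij]
  refine ⟨fun l => ?_, fun l => ?_, hsum, fun l hl => ?_, ?_⟩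
  · rw [hq]; split_ifs <;> linarith [h0 l]
  · rw [hq]; split_ifs <;> linarith [hα l]
  · rw [mem_support, hq] at hl
    split_ifs at hl with hli hlj
    · subst hli; exact hpi.1.ne'
    · subst hlj; exact hpj.1.ne'
    · exact hl
  refine (ssubset_iff_of_subset fun l hl => ?_).2 ?_
  · simp only [fractionalCoords, mem_filter, mem_univ, true_and, hq] at hl ⊢
    split_ifs at hl with hli hlj
    · subst hli; exact hpi
    · subst hlj; exact hpj
    · exact hl
  have hout : ∀ l, (q l = 0 ∨ q l = α) → l ∉ fractionalCoords α q := by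
    intro l hl hmem
    simp only [fractionalCoords, mem_filter] at hmem
    rcases hl with hl | hl <;> linarith [hmem.2.1, hmem.2.2]
  rcases hend with h | h
  · exact ⟨i, hi, hout i (by rwa [hq, if_pos rfl])⟩
  · exact ⟨j, hj, hout j (by rwa [hq, if_neg hij.symm, if_pos rfl])⟩

-- Move mass along `e i - e j` in either direction until coordinate `i` or `j` reaches `0` or `α`.
theorem exists_segment_fractionalCoords_ssubset (h0 : ∀ j, 0 ≤ p j) (hα : ∀ j, p j ≤ α)
    {i j : Fin n} (hij : i ≠ j) (hi : i ∈ fractionalCoords α p)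
    (hj : j ∈ fractionalCoords α p) :
    ∃ q₁ q₂, p ∈ segment ℝ q₁ q₂ ∧ ∀ q ∈ ({q₁, q₂} : Set (Fin n → ℝ)),
      (∀ l, 0 ≤ q l) ∧ (∀ l, q l ≤ α) ∧ ∑ l, q l = ∑ l, p l ∧ support q ⊆ support p ∧
        fractionalCoords α q ⊂ fractionalCoords α p := by
  have hpi := hi
  have hpj := hj
  simp only [fractionalCoords, mem_filter, mem_univ, true_and] at hpi hpj
  obtain ⟨b, hbi, hbj, hb⟩ : ∃ b, b ≤ α - p i ∧ b ≤ p j ∧ (b = α - p i ∨ b = p j) :=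
    ⟨_, min_le_left _ _, min_le_right _ _, min_choice _ _⟩
  obtain ⟨a, hai, haj, ha⟩ : ∃ a, a ≤ p i ∧ a ≤ α - p j ∧ (a = p i ∨ a = α - p j) :=
    ⟨_, min_le_left _ _, min_le_right _ _, min_choice _ _⟩
  have hb0 : 0 < b := by rcases hb with rfl | rfl <;> linarith
  have ha0 : 0 < a := by rcases ha with rfl | rfl <;> linarith
  set e : Fin n → ℝ := Pi.single i 1 - Pi.single j 1
  refine ⟨p + b • e, p + (-a) • e, ⟨a / (a + b), b / (a + b), by positivity, by positivity,
    by field_simp, ?_⟩, ?_⟩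
  · ext l; simp only [Pi.add_apply, Pi.smul_apply, smul_eq_mul]; field_simp; ring
  rintro q (rfl | rfl)
  · refine fractionalCoords_add_smul_single_sub_single_ssubset h0 hα hij hi hj (by linarith)
      hbi (by linarith) hbj ?_ rfl
    rcases hb with rfl | rfl <;> simp
  · refine fractionalCoords_add_smul_single_sub_single_ssubset h0 hα hij hi hj (by linarith)
      (by linarith) (by linarith) (by linarith) ?_ rfl
    rcases ha with rfl | rfl <;> simp

theorem mem_convexHull_isSparse_of_nonneg (h0 : ∀ j, 0 ≤ p j)
    (hα : ∀ j, p j ≤ α) (h1 : ∑ j, p j ≤ k * α) :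
    p ∈ convexHull ℝ {q | IsSparse k q ∧ support q ⊆ support p ∧ (∀ j, 0 ≤ q j) ∧
      ∀ j, q j ≤ α} := by
  induction hN : #(fractionalCoords α p) using Nat.strong_induction_on generalizing p with
  | _ N ih =>
  by_cases hle : #(fractionalCoords α p) ≤ 1
  · exact subset_convexHull ℝ _
      ⟨isSparse_of_card_fractionalCoords_le_one h0 hα h1 hle, subset_rfl, h0, hα⟩
  obtain ⟨i, hi, j, hj, hij⟩ := one_lt_card.1 (not_le.1 hle)
  obtain ⟨q₁, q₂, hp, hq⟩ := exists_segment_fractionalCoords_ssubset h0 hα hij hi hj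
  have hmem : ∀ q ∈ ({q₁, q₂} : Set (Fin n → ℝ)), q ∈ convexHull ℝ {r | IsSparse k r ∧
      support r ⊆ support p ∧ (∀ j, 0 ≤ r j) ∧ ∀ j, r j ≤ α} := by
    intro q hq'
    obtain ⟨hq0, hqα, hqsum, hqsupp, hqfrac⟩ := hq q hq'
    refine convexHull_mono ?_ (ih _ (hN ▸ card_lt_card hqfrac) hq0 hqα (hqsum ▸ h1) rfl)
    exact fun r hr => ⟨hr.1, hr.2.1.trans hqsupp, hr.2.2⟩
  exact (convex_convexHull ℝ _).segment_subset (hmem q₁ (by simp)) (hmem q₂ (by simp)) hp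

theorem mem_convexHull_isSparse {v : Fin n → ℝ} (hα : ∀ j, |v j| ≤ α)
    (h1 : ∑ j, |v j| ≤ k * α) :
    v ∈ convexHull ℝ {u | IsSparse k u ∧ support u ⊆ support v ∧ ∀ j, |u j| ≤ α} := by
  have habs := mem_convexHull_isSparse_of_nonneg (p := fun j => |v j|)
    (fun j => abs_nonneg _) hα h1
  set σ : Fin n → ℝ := fun j => SignType.sign (v j)
  have hσ : LinearMap.mulLeft ℝ σ (fun j => |v j|) = v := by ext j; simp [σ]
  have := Set.mem_image_of_mem (LinearMap.mulLeft ℝ σ) habs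
  rw [LinearMap.image_convexHull, hσ] at this
  refine convexHull_mono ?_ this
  rintro _ ⟨q, ⟨hq, hqs, hq0, hqα⟩, rfl⟩
  have hsupp : support (σ * q) ⊆ support q := support_mul_subset_right σ q
  refine ⟨hq.of_support_subset hsupp, hsupp.trans ?_, fun j => ?_⟩
  · simpa using hqs
  have := hq0 j
  have := hqα j
  simp only [LinearMap.mulLeft_apply, Pi.mul_apply, σ]
  cases SignType.sign (v j) <;> simp [abs_of_nonneg (hq0 j)] <;> linarith

end CappedSimplex

theorem exists_finset_card_le_sum_max {ι : Type*} [Fintype ι] [DecidableEq ι] (f : ι → ℝ)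
    (hf : ∀ i, 0 ≤ f i) (k : ℕ) :
    ∃ T : Finset ι, #T ≤ k ∧ (∀ s : Finset ι, #s ≤ k → ∑ i ∈ s, f i ≤ ∑ i ∈ T, f i) ∧
      ∀ j ∉ T, k * f j ≤ ∑ i ∈ T, f i := by
  obtain ⟨T, hT, hmax⟩ := exists_max_image ({s | #s ≤ k} : Finset (Finset ι))
    (fun s => ∑ i ∈ s, f i) ⟨∅, by simp⟩
  simp only [mem_filter, mem_univ, true_and] at hT hmax
  refine ⟨T, hT, hmax, fun j hj => ?_⟩
  have hswap : ∀ i ∈ T, f j ≤ f i := by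
    intro i hi
    have hjT : j ∉ T.erase i := fun h => hj (mem_of_mem_erase h)
    have := hmax (insert j (T.erase i)) (by rwa [card_insert_of_notMem hjT, card_erase_add_one hi])
    rw [sum_insert hjT, ← add_sum_erase T f hi] at this
    linarith
  obtain hTk | hTk := hT.eq_or_lt
  · calc k * f j = ∑ _i ∈ T, f j := by rw [sum_const, hTk, nsmul_eq_mul]
      _ ≤ ∑ i ∈ T, f i := sum_le_sum hswap
  · have := hmax (insert j T) (by rwa [card_insert_of_notMem hj])
    rw [sum_insert hj] at this
    rw [le_antisymm (by linarith) (hf j), mul_zero]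
    exact sum_nonneg fun i _ => hf i

section HeadTail

variable {n k : ℕ}

theorem mem_convexHull_tail {h : Fin n → ℝ} {T : Finset (Fin n)} (hk : 0 < k) (hT : #T ≤ k)
    (hdom : ∀ j ∉ T, k * |h j| ≤ ∑ i ∈ T, |h i|) (htail : ∑ j ∈ Tᶜ, |h j| ≤ ∑ j ∈ T, |h j|) :
    (fun j => if j ∈ T then 0 else h j) ∈ convexHull ℝ
      {u | IsSparse k u ∧ (∀ j ∈ T, u j = 0) ∧ ∑ j, u j ^ 2 ≤ ∑ j ∈ T, h j ^ 2} := by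
  set v : Fin n → ℝ := fun j => if j ∈ T then 0 else h j
  have hkR : (0 : ℝ) < k := by exact_mod_cast hk
  set α := (∑ j ∈ T, |h j|) / k
  have hkα : k * α = ∑ j ∈ T, |h j| := mul_div_cancel₀ _ hkR.ne'
  have hα : ∀ j, |v j| ≤ α := fun j => by
    by_cases hj : j ∈ T
    · simpa [v, hj] using div_nonneg (sum_nonneg fun j _ => abs_nonneg (h j)) hkR.le
    · simpa [v, hj, α, le_div_iff₀ hkR, mul_comm] using hdom j hj
  have h1 : ∑ j, |v j| ≤ k * α := by
    rw [hkα, ← sum_subset (subset_univ Tᶜ) fun j _ hj => by simp [v, by simpa using hj]]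
    exact (sum_congr rfl fun j hj => by simp [v, mem_compl.1 hj]).trans_le htail
  refine convexHull_mono ?_ (mem_convexHull_isSparse hα h1)
  rintro u ⟨hu, husupp, huα⟩
  refine ⟨hu, fun j hj => notMem_support.1 fun huj => by simpa [v, hj] using husupp huj, ?_⟩
  calc ∑ j, u j ^ 2 ≤ k * α ^ 2 := hu.sum_sq_le huα
    _ = (∑ j ∈ T, |h j|) ^ 2 / k := by rw [← hkα]; field_simp
    _ ≤ #T * (∑ j ∈ T, |h j| ^ 2) / k := by gcongr; exact sq_sum_le_card_mul_sum_sq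
    _ ≤ k * (∑ j ∈ T, h j ^ 2) / k := by simp only [sq_abs]; gcongr
    _ = ∑ j ∈ T, h j ^ 2 := by field_simp

theorem exists_head_mem_convexHull_tail {h : Fin n → ℝ} (hh : h ≠ 0) {s : Finset (Fin n)}
    (hs : #s ≤ k) (hsc : ∑ j ∈ sᶜ, |h j| ≤ ∑ j ∈ s, |h j|) :
    ∃ g : Fin n → ℝ, g ≠ 0 ∧ IsSparse k g ∧ h - g ∈ convexHull ℝ {u | IsSparse k u ∧
      (∀ j, g j * u j = 0) ∧ ∑ j, u j ^ 2 ≤ ∑ j, g j ^ 2} := by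
  obtain ⟨T, hTk, hTmax, hTdom⟩ :=
    exists_finset_card_le_sum_max (fun j => |h j|) (fun j => abs_nonneg _) k
  have htail : ∑ j ∈ Tᶜ, |h j| ≤ ∑ j ∈ T, |h j| := by
    have := hTmax s hs
    have := sum_add_sum_compl s fun j => |h j|
    have := sum_add_sum_compl T fun j => |h j|
    linarith
  set g : Fin n → ℝ := fun j => if j ∈ T then h j else 0
  have hg : g ≠ 0 := by
    intro hg0
    have hT0 : ∑ j ∈ T, |h j| = 0 :=
      sum_eq_zero fun j hj => by simpa [g, hj] using congrFun hg0 j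
    refine hh (funext fun j => ?_)
    by_cases hj : j ∈ T
    · simpa [g, hj] using congrFun hg0 j
    · exact abs_eq_zero.1 ((sum_eq_zero_iff_of_nonneg fun _ _ => abs_nonneg _).1
        (le_antisymm (hT0 ▸ htail) (sum_nonneg fun _ _ => abs_nonneg _)) j (mem_compl.2 hj))
  have hk : 0 < k := by
    obtain ⟨j, hj⟩ := Function.ne_iff.1 hg
    have hjT : j ∈ T := by by_contra hjT; simp [g, hjT] at hj
    exact (card_pos.2 ⟨j, hjT⟩).trans_le hTk
  have hv : h - g = fun j => if j ∈ T then 0 else h j :=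
    funext fun j => by by_cases hj : j ∈ T <;> simp [g, hj]
  have hg2 : ∑ j, g j ^ 2 = ∑ j ∈ T, h j ^ 2 := by
    rw [← sum_subset (subset_univ T) fun j _ hj => by simp [g, hj]]
    exact sum_congr rfl fun j hj => by simp [g, hj]
  refine ⟨g, hg, ⟨T, hTk, fun j hj => if_neg hj⟩,
    hv ▸ convexHull_mono ?_ (mem_convexHull_tail hk hTk hTdom htail)⟩
  rintro u ⟨hu, huT, hu2⟩
  refine ⟨hu, fun j => ?_, hg2 ▸ hu2⟩
  by_cases hj : j ∈ T
  · rw [huT j hj, mul_zero]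
  · simp [g, hj]

end HeadTail

section InnerProductSpace

variable {E F : Type*} [NormedAddCommGroup E] [InnerProductSpace ℝ E]
  [NormedAddCommGroup F] [InnerProductSpace ℝ F]

theorem norm_smul_add_smul_sq_real (x y : E) (a b : ℝ) :
    ‖a • x + b • y‖ ^ 2 = a ^ 2 * ‖x‖ ^ 2 + 2 * a * b * ⟪x, y⟫ + b ^ 2 * ‖y‖ ^ 2 := by
  rw [norm_add_sq_real, norm_smul, norm_smul, real_inner_smul_left, real_inner_smul_right,
    Real.norm_eq_abs, Real.norm_eq_abs, mul_pow, mul_pow, sq_abs, sq_abs]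
  ring

theorem rip_two_point_bound (Φ : E →ₗ[ℝ] F) {δ : ℝ} (hδ : 0 ≤ δ) {g u : E}
    (horth : ⟪g, u⟫ = 0) (hnorm : ‖u‖ ≤ ‖g‖)
    (hrip : ∀ a b : ℝ, (1 - δ) * ‖a • g + b • u‖ ^ 2 ≤ ‖Φ (a • g + b • u)‖ ^ 2 ∧
      ‖Φ (a • g + b • u)‖ ^ 2 ≤ (1 + δ) * ‖a • g + b • u‖ ^ 2) (μ : ℝ) :
    (1 - μ ^ 4 - δ * (1 + μ ^ 2) ^ 2) * ‖g‖ ^ 2 ≤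
      (1 - μ ^ 4) * ‖Φ g‖ ^ 2 + 2 * μ * (1 + μ ^ 2) * ⟪Φ g, Φ u⟫ := by
  -- the `‖Φ u‖²` terms cancel in `hlower - μ ^ 2 * hupper`
  have hlower := (hrip 1 μ).1
  have hupper := (hrip μ (-1)).2
  simp only [map_add, map_smul, norm_smul_add_smul_sq_real, horth] at hlower hupper
  have hsq : ‖u‖ ^ 2 ≤ ‖g‖ ^ 2 := pow_le_pow_left₀ (norm_nonneg u) hnorm 2
  nlinarith [mul_nonneg (mul_nonneg hδ (sq_nonneg μ)) (sub_nonneg.2 hsq)]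

theorem inv_sqrt_two_le_of_mem_convexHull (Φ : E →ₗ[ℝ] F) {δ : ℝ} (hδ : 0 ≤ δ) {g v : E}
    (hg : g ≠ 0) (hker : Φ (g + v) = 0)
    (hv : v ∈ convexHull ℝ {u | ⟪g, u⟫ = 0 ∧ ‖u‖ ≤ ‖g‖ ∧
      ∀ a b : ℝ, (1 - δ) * ‖a • g + b • u‖ ^ 2 ≤ ‖Φ (a • g + b • u)‖ ^ 2 ∧
        ‖Φ (a • g + b • u)‖ ^ 2 ≤ (1 + δ) * ‖a • g + b • u‖ ^ 2}) :
    1 / √2 ≤ δ := by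
  set μ := √2 - 1
  set c := 1 - μ ^ 4 - δ * (1 + μ ^ 2) ^ 2
  have hhalf : Convex ℝ {u | c * ‖g‖ ^ 2 - (1 - μ ^ 4) * ‖Φ g‖ ^ 2 ≤
      2 * μ * (1 + μ ^ 2) * ⟪Φ g, Φ u⟫} := by
    refine convex_halfSpace_ge ⟨fun x y => ?_, fun a x => ?_⟩ _
    · rw [map_add, inner_add_right, mul_add]
    · rw [map_smul, real_inner_smul_right, smul_eq_mul]; ring
  have hcv := convexHull_min (fun u hu => by
    have := rip_two_point_bound Φ hδ hu.1 hu.2.1 hu.2.2 μ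
    simp only [Set.mem_ofPred_eq]; linarith) hhalf hv
  have hΦv : Φ v = -Φ g := eq_neg_of_add_eq_zero_right (map_add Φ g v ▸ hker)
  simp only [Set.mem_ofPred_eq, hΦv, inner_neg_right, real_inner_self_eq_norm_sq] at hcv
  have hs : √2 ^ 2 = 2 := Real.sq_sqrt zero_le_two
  -- `μ = √2 - 1` is the root of `1 - μ ^ 4 = 2 μ (1 + μ ^ 2)` that cancels the `‖Φ g‖ ^ 2` terms
  have hcoef : 1 - μ ^ 4 - 2 * μ * (1 + μ ^ 2) = 0 := by
    linear_combination (-(√2 ^ 2 - 2 * √2 + 2)) * hs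
  have hc : c * ‖g‖ ^ 2 ≤ 0 := by linear_combination hcv + ‖Φ g‖ ^ 2 * hcoef
  have hfactor : c = (4 - 2 * √2) * (2 * √2 - 2) * (1 - √2 * δ) := by
    linear_combination ((-1 - δ) * √2 ^ 2 + 4 * √2 - 4 + 2 * δ) * hs
  have hs1 : 1 < √2 := by nlinarith [Real.sqrt_nonneg 2]
  have hs2 : √2 < 2 := by nlinarith
  have hc' : c ≤ 0 := nonpos_of_mul_nonpos_left hc (by positivity)
  rw [hfactor] at hc'
  have := nonpos_of_mul_nonpos_right hc' (mul_pos (by linarith) (by linarith))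
  rw [div_le_iff₀ (by positivity)]
  linarith

end InnerProductSpace

section Matrix

open Matrix

variable {m n k : ℕ}

def HasRIP (Φ : Matrix (Fin m) (Fin n) ℝ) (k : ℕ) (δ : ℝ) : Prop :=
  ∀ x : Fin n → ℝ, IsSparse k x →
    (1 - δ) * ‖toLp 2 x‖ ^ 2 ≤ ‖toLp 2 (Φ *ᵥ x)‖ ^ 2 ∧
      ‖toLp 2 (Φ *ᵥ x)‖ ^ 2 ≤ (1 + δ) * ‖toLp 2 x‖ ^ 2

theorem norm_toLp_two_sq {ι : Type*} [Fintype ι] (x : ι → ℝ) :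
    ‖toLp 2 x‖ ^ 2 = ∑ i, x i ^ 2 := by
  simp [EuclideanSpace.real_norm_sq_eq]

theorem ric_eq_sInf_hasRIP (Φ : Matrix (Fin m) (Fin n) ℝ) :
    ric Φ k = sInf {δ | 0 ≤ δ ∧ HasRIP Φ k δ} := by
  simp only [ric, HasRIP, norm_toLp_two_sq, mulVec, dotProduct]

theorem hasRIP_opNorm_sq_add_one (Φ : Matrix (Fin m) (Fin n) ℝ) :
    HasRIP Φ k (‖LinearMap.toContinuousLinearMap (toLpLin 2 2 Φ)‖ ^ 2 + 1) := by
  intro x _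
  set L := LinearMap.toContinuousLinearMap (toLpLin 2 2 Φ)
  have hL : ‖toLp 2 (Φ *ᵥ x)‖ ≤ ‖L‖ * ‖toLp 2 x‖ := L.le_opNorm (toLp 2 x)
  have hsq := pow_le_pow_left₀ (norm_nonneg _) hL 2
  constructor <;> nlinarith [sq_nonneg ‖toLp 2 x‖, sq_nonneg ‖toLp 2 (Φ *ᵥ x)‖,
    sq_nonneg (‖L‖ * ‖toLp 2 x‖)]

theorem exists_hasRIP_of_ric_lt {Φ : Matrix (Fin m) (Fin n) ℝ} {c : ℝ} (h : ric Φ k < c) :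
    ∃ δ, 0 ≤ δ ∧ δ < c ∧ HasRIP Φ k δ := by
  rw [ric_eq_sInf_hasRIP] at h
  -- `sInf ∅ = 0`, so the admissible constants must be shown to exist
  obtain ⟨δ, ⟨hδ0, hδ⟩, hδc⟩ :=
    exists_lt_of_csInf_lt (s := {δ | 0 ≤ δ ∧ HasRIP Φ k δ})
      ⟨_, by positivity, hasRIP_opNorm_sq_add_one Φ⟩ h
  exact ⟨δ, hδ0, hδc, hδ⟩

def NullSpaceProperty (Φ : Matrix (Fin m) (Fin n) ℝ) (k : ℕ) : Prop :=
  ∀ h : Fin n → ℝ, Φ *ᵥ h = 0 → h ≠ 0 →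
    ∀ s : Finset (Fin n), #s ≤ k → ∑ j ∈ s, |h j| < ∑ j ∈ sᶜ, |h j|

theorem NullSpaceProperty.sum_abs_lt {Φ : Matrix (Fin m) (Fin n) ℝ}
    (hΦ : NullSpaceProperty Φ k) {x z : Fin n → ℝ} (hx : IsSparse k x)
    (hz : Φ *ᵥ z = Φ *ᵥ x) (hzx : z ≠ x) : ∑ j, |x j| < ∑ j, |z j| := by
  obtain ⟨s, hs, hxs⟩ := hx
  have hnsp := hΦ (z - x) (by rw [mulVec_sub, hz, sub_self]) (sub_ne_zero.2 hzx) s hs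
  have hx_s : ∑ j, |x j| = ∑ j ∈ s, |x j| :=
    (sum_subset (subset_univ s) fun j _ hj => by simp [hxs j hj]).symm
  have hz_sc : ∑ j ∈ sᶜ, |(z - x) j| = ∑ j ∈ sᶜ, |z j| :=
    sum_congr rfl fun j hj => by simp [hxs j (mem_compl.1 hj)]
  have htri : ∑ j ∈ s, |x j| ≤ ∑ j ∈ s, |z j| + ∑ j ∈ s, |(z - x) j| := by
    rw [← sum_add_distrib]
    exact sum_le_sum fun j _ => by simpa using abs_sub (z j) (z j - x j)
  rw [hx_s, ← sum_add_sum_compl s fun j => |z j|]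
  linarith

theorem HasRIP.nullSpaceProperty {Φ : Matrix (Fin m) (Fin n) ℝ} {δ : ℝ}
    (hΦ : HasRIP Φ (2 * k) δ) (hδ0 : 0 ≤ δ) (hδ : δ < 1 / √2) : NullSpaceProperty Φ k := by
  intro h hker hh s hs
  by_contra! hsc
  obtain ⟨g, hg, hgk, hv⟩ := exists_head_mem_convexHull_tail hh hs hsc
  have hv' := Set.mem_image_of_mem (WithLp.linearEquiv 2 ℝ (Fin n → ℝ)).symm.toLinearMap hv
  rw [LinearMap.image_convexHull] at hv'
  simp only [LinearEquiv.coe_coe, coe_symm_linearEquiv] at hv'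
  refine hδ.not_ge (inv_sqrt_two_le_of_mem_convexHull (toLpLin 2 2 Φ) hδ0
    (g := toLp 2 g) ((toLp_eq_zero 2).not.2 hg) ?_ (convexHull_mono ?_ hv'))
  · simp [toLpLin_toLp, hker]
  · rintro _ ⟨u, ⟨hu, hgu, hu2⟩, rfl⟩
    refine ⟨?_, ?_, fun a b => ?_⟩
    · simp only [EuclideanSpace.inner_toLp_toLp, dotProduct, star_trivial]
      exact sum_eq_zero fun j _ => by rw [mul_comm, hgu]
    · rw [← pow_le_pow_iff_left₀ (norm_nonneg _) (norm_nonneg _) two_ne_zero,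
        norm_toLp_two_sq, norm_toLp_two_sq]
      exact hu2
    · rw [← toLp_smul, ← toLp_smul, ← toLp_add, toLpLin_toLp]
      exact hΦ _ (two_mul k ▸ (hgk.smul a).add (hu.smul b))

end Matrix

theorem basis_pursuit_recovery_general {m n : ℕ} (Φ : Matrix (Fin m) (Fin n) ℝ) (k : ℕ)
    (hδ : ric Φ (2 * k) < 1 / Real.sqrt 2)
    (x : Fin n → ℝ) (hx : IsSparse k x) :
    ∀ z : Fin n → ℝ, Φ.mulVec z = Φ.mulVec x → z ≠ x →
      ∑ j, |x j| < ∑ j, |z j| := by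
  obtain ⟨δ, hδ0, hδ, hΦ⟩ := exists_hasRIP_of_ric_lt hδ
  exact fun z hz hzx => (hΦ.nullSpaceProperty hδ0 hδ).sum_abs_lt hx hz hzx

/-- If δ_{2k} < 1/√2, then every k-sparse x is the unique ℓ1 minimizer subject to
Φz = Φx. -/
theorem basis_pursuit_recovery {m n : ℕ} (Φ : Matrix (Fin m) (Fin n) ℝ)
    (hcols : ∀ j, ∑ i, Φ i j ^ 2 = 1) (k : ℕ)
    (hδ : ric Φ (2 * k) < 1 / Real.sqrt 2)
    (x : Fin n → ℝ) (hx : IsSparse k x) :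
    ∀ z : Fin n → ℝ, Φ.mulVec z = Φ.mulVec x → z ≠ x →
      ∑ j, |x j| < ∑ j, |z j| :=
  basis_pursuit_recovery_general Φ k hδ x hx
end

section
/- Let Φ be an m × n matrix with coherence μ and unit-norm columns, and let x ∈ ℝⁿ be k-sparse with k·μ < 1/2 (equivalently k < (1 + 1/μ)/2). Then x is the unique sparsest solution of Φz = Φx, and basis pursuit recovers x exactly. -/
open Finset

lemma key_coord {m n : ℕ} (Φ : Matrix (Fin m) (Fin n) ℝ) (μ : ℝ)
    (hcols : ∀ j, ∑ i, Φ i j ^ 2 = 1)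
    (hμ : ∀ a b : Fin n, a ≠ b → |∑ i, Φ i a * Φ i b| ≤ μ)
    (h : Fin n → ℝ) (hnull : Φ.mulVec h = 0) (j : Fin n) :
    |h j| + μ * |h j| ≤ μ * ∑ a, |h a| := by
  have e0 : ∑ i, (Φ.mulVec h i) * Φ i j = 0 := by simp [hnull]
  have e1 : ∑ a, h a * (∑ i, Φ i a * Φ i j) = 0 := by
    rw [← e0]
    simp only [Matrix.mulVec, dotProduct, Finset.mul_sum, Finset.sum_mul]
    rw [Finset.sum_comm]
    apply Finset.sum_congr rfl
    intro a _
    apply Finset.sum_congr rfl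
    intro i _
    ring
  have hjj : (∑ i, Φ i j * Φ i j) = 1 := by
    rw [← hcols j]; apply Finset.sum_congr rfl; intro i _; ring
  have e2 : h j + ∑ a ∈ univ.erase j, h a * (∑ i, Φ i a * Φ i j) = 0 := by
    have h5 := Finset.add_sum_erase univ (fun a => h a * (∑ i, Φ i a * Φ i j)) (mem_univ j)
    rw [hjj, mul_one] at h5
    rw [h5]; exact e1
  have e3 : |h j| ≤ ∑ a ∈ univ.erase j, |h a| * μ := by
    have : h j = -(∑ a ∈ univ.erase j, h a * (∑ i, Φ i a * Φ i j)) := by linarith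
    rw [this, abs_neg]
    calc |∑ a ∈ univ.erase j, h a * (∑ i, Φ i a * Φ i j)|
        ≤ ∑ a ∈ univ.erase j, |h a * (∑ i, Φ i a * Φ i j)| := Finset.abs_sum_le_sum_abs _ _
      _ ≤ ∑ a ∈ univ.erase j, |h a| * μ := by
          apply Finset.sum_le_sum
          intro a ha
          rw [abs_mul]
          exact mul_le_mul_of_nonneg_left (hμ a j (Finset.ne_of_mem_erase ha)) (abs_nonneg _)
  have e4 : ∑ a ∈ univ.erase j, |h a| * μ = (∑ a, |h a| - |h j|) * μ := by
    rw [← Finset.sum_mul]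
    congr 1
    exact Finset.sum_erase_eq_sub (mem_univ j)
  nlinarith [e3, e4]

lemma nsp {m n : ℕ} (Φ : Matrix (Fin m) (Fin n) ℝ) (μ : ℝ)
    (hcols : ∀ j, ∑ i, Φ i j ^ 2 = 1)
    (hμ : ∀ a b : Fin n, a ≠ b → |∑ i, Φ i a * Φ i b| ≤ μ)
    (k : ℕ) (hkμ : (k : ℝ) * μ < 1 / 2)
    (h : Fin n → ℝ) (hnull : Φ.mulVec h = 0) (hne : h ≠ 0)
    (T : Finset (Fin n)) (hT : T.card ≤ k) :
    ∑ j ∈ T, |h j| < (1 / 2) * ∑ j, |h j| := by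
  obtain ⟨j₁, hj₁⟩ : ∃ j, h j ≠ 0 := by
    by_contra hc; push_neg at hc; exact hne (funext hc)
  have hS : 0 < ∑ j, |h j| :=
    Finset.sum_pos' (fun j _ => abs_nonneg _) ⟨j₁, mem_univ _, abs_pos.mpr hj₁⟩
  by_cases hc : ∀ j ∈ T, h j = 0
  · have : ∑ j ∈ T, |h j| = 0 := Finset.sum_eq_zero (fun j hj => by rw [hc j hj, abs_zero])
    rw [this]; positivity
  push_neg at hc
  obtain ⟨j₀, hj₀T, hj₀⟩ := hc
  set S := ∑ j, |h j| with hSdef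
  have hk0 := key_coord Φ μ hcols hμ h hnull j₀
  have habs : 0 < |h j₀| := abs_pos.mpr hj₀
  have hle : |h j₀| ≤ S := Finset.single_le_sum (fun j _ => abs_nonneg (h j)) (mem_univ j₀)
  have hμpos : 0 < μ := by nlinarith
  have hsum : ∑ j ∈ T, (|h j| + μ * |h j|) ≤ (T.card : ℝ) * (μ * S) := by
    have := Finset.sum_le_card_nsmul T (fun j => |h j| + μ * |h j|) (μ * S)
      (fun j _ => key_coord Φ μ hcols hμ h hnull j)
    simpa [nsmul_eq_mul] using this
  have hcard : (T.card : ℝ) ≤ (k : ℝ) := by exact_mod_cast hT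
  have hA : (1 + μ) * ∑ j ∈ T, |h j| ≤ (k : ℝ) * μ * S := by
    have : ∑ j ∈ T, (|h j| + μ * |h j|) = (1 + μ) * ∑ j ∈ T, |h j| := by
      rw [Finset.mul_sum]; apply Finset.sum_congr rfl; intro j _; ring
    nlinarith [hsum, mul_le_mul_of_nonneg_right hcard (le_of_lt (mul_pos hμpos hS))]
  have hAnn : 0 ≤ ∑ j ∈ T, |h j| := Finset.sum_nonneg (fun j _ => abs_nonneg _)
  nlinarith

/-- Coherence-based exact recovery: if Φ has unit-norm columns, coherence at most μ,
and x is k-sparse with k·μ < 1/2, then x is the unique sparsest solution of Φz = Φx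
and basis pursuit recovers x exactly. -/
theorem coherence_recovery {m n : ℕ} (Φ : Matrix (Fin m) (Fin n) ℝ) (μ : ℝ)
    (hcols : ∀ j, ∑ i, Φ i j ^ 2 = 1)
    (hμ : ∀ a b : Fin n, a ≠ b → |∑ i, Φ i a * Φ i b| ≤ μ)
    (k : ℕ) (x : Fin n → ℝ) (hx : IsSparse k x) (hkμ : (k : ℝ) * μ < 1 / 2) :
    (∀ z : Fin n → ℝ, Φ.mulVec z = Φ.mulVec x → z ≠ x →
      {j | x j ≠ 0}.ncard < {j | z j ≠ 0}.ncard) ∧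
    (∀ z : Fin n → ℝ, Φ.mulVec z = Φ.mulVec x → z ≠ x →
      ∑ j, |x j| < ∑ j, |z j|) := by
  obtain ⟨s, hcard, hsupp⟩ := hx
  have hmain : ∀ z : Fin n → ℝ, Φ.mulVec z = Φ.mulVec x → z ≠ x →
      (Φ.mulVec (z - x) = 0 ∧ z - x ≠ 0) := by
    intro z hz hne
    constructor
    · rw [Matrix.mulVec_sub, hz, sub_self]
    · intro hc; exact hne (by funext j; have := congrFun hc j; simpa [sub_eq_zero] using this)
  constructor
  · -- sparsity part
    intro z hz hne
    obtain ⟨hnull, hne0⟩ := hmain z hz hne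
    by_contra hcon
    push_neg at hcon
    set T : Finset (Fin n) := univ.filter (fun j => z j ≠ 0) with hTdef
    have hxfin : {j | x j ≠ 0}.ncard = (univ.filter (fun j => x j ≠ 0)).card := by
      rw [Set.ncard_eq_toFinset_card']; congr 1; ext j; simp
    have hzfin : {j | z j ≠ 0}.ncard = T.card := by
      rw [Set.ncard_eq_toFinset_card']; congr 1; ext j; simp [hTdef]
    have hxs : (univ.filter (fun j => x j ≠ 0)) ⊆ s := by
      intro j hj
      simp only [mem_filter] at hj
      by_contra hjs
      exact hj.2 (hsupp j hjs)
    have hTk : T.card ≤ k := by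
      calc T.card = {j | z j ≠ 0}.ncard := hzfin.symm
        _ ≤ {j | x j ≠ 0}.ncard := hcon
        _ = (univ.filter (fun j => x j ≠ 0)).card := hxfin
        _ ≤ s.card := Finset.card_le_card hxs
        _ ≤ k := hcard
    have h1 := nsp Φ μ hcols hμ k hkμ (z - x) hnull hne0 s hcard
    have h2 := nsp Φ μ hcols hμ k hkμ (z - x) hnull hne0 T hTk
    have hsupp2 : ∀ j, (z - x) j ≠ 0 → j ∈ s ∪ T := by
      intro j hj
      by_contra hc
      simp only [Finset.mem_union, hTdef, mem_filter, mem_univ, true_and, not_or, not_not] at hc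
      exact hj (by simp [hsupp j hc.1, hc.2])
    have heq : ∑ j, |(z - x) j| = ∑ j ∈ s ∪ T, |(z - x) j| := by
      symm
      apply Finset.sum_subset (Finset.subset_univ _)
      intro j _ hj
      by_contra hc
      exact hj (hsupp2 j (fun h0 => hc (by rw [h0, abs_zero])))
    have hle : ∑ j ∈ s ∪ T, |(z - x) j| ≤ ∑ j ∈ s, |(z - x) j| + ∑ j ∈ T, |(z - x) j| := by
      have hui := Finset.sum_union_inter (s₁ := s) (s₂ := T) (f := fun j => |(z - x) j|)
      have hnn : 0 ≤ ∑ j ∈ s ∩ T, |(z - x) j| :=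
        Finset.sum_nonneg (fun j _ => abs_nonneg _)
      linarith
    linarith [h1, h2, hle, heq]
  · -- ℓ1 part
    intro z hz hne
    obtain ⟨hnull, hne0⟩ := hmain z hz hne
    have hnsp := nsp Φ μ hcols hμ k hkμ (z - x) hnull hne0 s hcard
    set S := ∑ j, |(z - x) j| with hSdef
    have hxeq : ∑ j, |x j| = ∑ j ∈ s, |x j| := by
      symm
      apply Finset.sum_subset (Finset.subset_univ _)
      intro j _ hj
      rw [hsupp j hj, abs_zero]
    have hsplit : ∑ j, |z j| = ∑ j ∈ s, |z j| + ∑ j ∈ sᶜ, |z j| :=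
      (Finset.sum_add_sum_compl s _).symm
    have h1 : ∑ j ∈ s, |x j| - ∑ j ∈ s, |(z - x) j| ≤ ∑ j ∈ s, |z j| := by
      rw [← Finset.sum_sub_distrib]
      apply Finset.sum_le_sum
      intro j _
      have : |x j| ≤ |z j| + |(z - x) j| := by
        have := abs_sub_abs_le_abs_sub (x j) (z j)
        have h2 := abs_sub_comm (x j) (z j)
        simp only [Pi.sub_apply]
        rw [abs_sub_comm] at this
        linarith [abs_sub_abs_le_abs_sub (x j) (z j), (by rw [abs_sub_comm] : |x j - z j| = |z j - x j|)]
      linarith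
    have h2 : ∑ j ∈ sᶜ, |z j| = S - ∑ j ∈ s, |(z - x) j| := by
      have : ∑ j ∈ sᶜ, |z j| = ∑ j ∈ sᶜ, |(z - x) j| := by
        apply Finset.sum_congr rfl
        intro j hj
        rw [Finset.mem_compl] at hj
        simp [hsupp j hj]
      rw [this, hSdef, ← Finset.sum_add_sum_compl s (fun j => |(z - x) j|)]
      ring
    linarith [hnsp]
end
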